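/- (Theorem 1, single-coordinate form.) Let m₁ ≤ m₂ be sub-σ-algebras of 𝒢, R ∈ L²(P), and λ ≥ 0. Let f := E[R | m₂] − E[R | m₁] and g* := S_λ(f) = (1 − λ/‖f‖₂)₊ · f. Then g* ∈ K(m₁, m₂), and for every g ∈ K(m₁, m₂) one has ‖R − g*‖₂² + 2λ‖g*‖₂ ≤ ‖R − g‖₂² + 2λ‖g‖₂; moreover any minimizer of g ↦ ‖R − g‖₂² + 2λ‖g‖₂ over K(m₁, m₂) equals g* a.e. -/

import Mathlib

/-!
`E[R|m₂] - E[R|m₁]` is the orthogonal projection `f` of `R` onto `K(m₁, m₂)`, so by Pythagoras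
the objective at `g ∈ K(m₁, m₂)` is `‖R - f‖² + ‖f - g‖² + 2λ‖g‖`, and minimising it is
evaluating the proximal map of `2λ‖·‖` at `f`, which is soft thresholding. The subgradient
inequality `⟪f - S_λ f, g⟫ ≤ λ‖g‖`, with equality at `g = S_λ f`, shows that the objective
exceeds its value at `S_λ f` by at least `‖g - S_λ f‖²`; this gives minimality and uniqueness
at once.
-/

open MeasureTheory

/-- `K(m₁, m₂)`: the set of `g ∈ L²(P)` that are a.e. equal to an `m₂`-measurable function
and satisfy `E[g | m₁] = 0` a.e. -/
def memK {Ω : Type*} {𝒢 : MeasurableSpace Ω} (m₁ m₂ : MeasurableSpace Ω)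
    (P : Measure[𝒢] Ω) (g : Ω → ℝ) : Prop :=
  MemLp g 2 P ∧ AEStronglyMeasurable[m₂] g P ∧ P[g|m₁] =ᵐ[P] 0

/-- The `L²(P)` norm of a real-valued function. -/
noncomputable def l2norm {Ω : Type*} {𝒢 : MeasurableSpace Ω} (P : Measure[𝒢] Ω)
    (h : Ω → ℝ) : ℝ :=
  (eLpNorm h 2 P).toReal

open scoped RealInnerProductSpace

section SoftThreshold

variable {E : Type*} [NormedAddCommGroup E] [InnerProductSpace ℝ E] {lam : ℝ}

noncomputable def softThreshold (lam : ℝ) (x : E) : E := max (1 - lam / ‖x‖) 0 • x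

lemma sub_softThreshold (x : E) :
    x - softThreshold lam x = (1 - max (1 - lam / ‖x‖) 0) • x := by
  rw [softThreshold, sub_smul, one_smul]

lemma inner_sub_softThreshold_le (hlam : 0 ≤ lam) (x y : E) :
    ⟪x - softThreshold lam x, y⟫ ≤ lam * ‖y‖ := by
  rcases eq_or_ne x 0 with rfl | hx
  · simp [softThreshold, mul_nonneg hlam (norm_nonneg y)]
  have ha : 0 < ‖x‖ := norm_pos_iff.mpr hx
  set c := max (1 - lam / ‖x‖) 0
  have hc1 : 0 ≤ 1 - c :=
    sub_nonneg.mpr (max_le (by linarith [div_nonneg hlam ha.le]) zero_le_one)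
  have hres : (1 - c) * ‖x‖ ≤ lam := by
    have : 1 - lam / ‖x‖ ≤ c := le_max_left _ _
    nlinarith [div_mul_cancel₀ lam ha.ne']
  calc ⟪x - softThreshold lam x, y⟫ = (1 - c) * ⟪x, y⟫ := by
        rw [sub_softThreshold, real_inner_smul_left]
    _ ≤ (1 - c) * (‖x‖ * ‖y‖) := mul_le_mul_of_nonneg_left (real_inner_le_norm x y) hc1
    _ = ((1 - c) * ‖x‖) * ‖y‖ := by ring
    _ ≤ lam * ‖y‖ := mul_le_mul_of_nonneg_right hres (norm_nonneg y)

lemma inner_sub_softThreshold_softThreshold (x : E) :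
    ⟪x - softThreshold lam x, softThreshold lam x⟫ = lam * ‖softThreshold lam x‖ := by
  rcases eq_or_ne x 0 with rfl | hx
  · simp [softThreshold]
  set c := max (1 - lam / ‖x‖) 0 with hc
  have hres : c * ((1 - c) * ‖x‖) = c * lam := by
    rcases max_choice (1 - lam / ‖x‖) 0 with h | h <;> rw [← hc] at h <;> rw [h]
    · rw [sub_sub_cancel, div_mul_cancel₀ lam (norm_ne_zero_iff.mpr hx)]
    · ring
  rw [sub_softThreshold, softThreshold, real_inner_smul_left, real_inner_smul_right,
    real_inner_self_eq_norm_sq, norm_smul, Real.norm_of_nonneg (le_max_right _ _)]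
  linear_combination ‖x‖ * hres

theorem norm_sub_softThreshold_sq_add_le (hlam : 0 ≤ lam) (x y : E) :
    ‖x - softThreshold lam x‖ ^ 2 + 2 * lam * ‖softThreshold lam x‖ +
        ‖y - softThreshold lam x‖ ^ 2 ≤ ‖x - y‖ ^ 2 + 2 * lam * ‖y‖ := by
  set p := softThreshold lam x
  have hsplit : x - y = (x - p) + (p - y) := by abel
  have hinner : ⟪x - p, p - y⟫ = lam * ‖p‖ - ⟪x - p, y⟫ := by
    rw [inner_sub_right, inner_sub_softThreshold_softThreshold]
  rw [hsplit, norm_add_sq_real, hinner, norm_sub_rev p y]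
  linarith [inner_sub_softThreshold_le hlam x y]

theorem norm_sub_softThreshold_sq_add_le_of_inner_eq_zero (hlam : 0 ≤ lam) {v x y : E}
    (hx : ⟪v - x, x⟫ = 0) (hy : ⟪v - x, y⟫ = 0) :
    ‖v - softThreshold lam x‖ ^ 2 + 2 * lam * ‖softThreshold lam x‖ +
        ‖y - softThreshold lam x‖ ^ 2 ≤ ‖v - y‖ ^ 2 + 2 * lam * ‖y‖ := by
  have pythagoras : ∀ z : E, ⟪v - x, z⟫ = 0 → ‖v - z‖ ^ 2 = ‖v - x‖ ^ 2 + ‖x - z‖ ^ 2 := by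
    intro z hz
    rw [← sub_add_sub_cancel v x z, norm_add_sq_real, inner_sub_right, hx, hz]
    ring
  have hS : ⟪v - x, softThreshold lam x⟫ = 0 := by
    rw [softThreshold, real_inner_smul_right, hx, mul_zero]
  rw [pythagoras y hy, pythagoras _ hS]
  linarith [norm_sub_softThreshold_sq_add_le hlam x y]

end SoftThreshold

section L2

variable {Ω : Type*} {m₀ : MeasurableSpace Ω} {P : Measure Ω}

lemma l2norm_eq_norm_toLp {g : Ω → ℝ} (hg : MemLp g 2 P) : l2norm P g = ‖hg.toLp g‖ :=
  (Lp.norm_toLp g hg).symm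

lemma l2norm_sub_eq_norm_toLp_sub {u w : Ω → ℝ} (hu : MemLp u 2 P) (hw : MemLp w 2 P) :
    l2norm P (fun ω => u ω - w ω) = ‖hu.toLp u - hw.toLp w‖ :=
  l2norm_eq_norm_toLp (hu.sub hw)

lemma ae_eq_of_l2norm_sub_eq_zero {u w : Ω → ℝ} (hu : MemLp u 2 P) (hw : MemLp w 2 P)
    (h : l2norm P (fun ω => u ω - w ω) = 0) : u =ᵐ[P] w := by
  rw [l2norm_sub_eq_norm_toLp_sub hu hw, norm_eq_zero, sub_eq_zero] at h
  exact (MemLp.toLp_eq_toLp_iff hu hw).mp h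

lemma inner_toLp_toLp {u w : Ω → ℝ} (hu : MemLp u 2 P) (hw : MemLp w 2 P) :
    ⟪hu.toLp u, hw.toLp w⟫ = ∫ ω, u ω * w ω ∂P := by
  rw [L2.inner_def]
  refine integral_congr_ae ?_
  filter_upwards [hu.coeFn_toLp, hw.coeFn_toLp] with ω hu' hw'
  rw [hu', hw', RCLike.inner_apply, conj_trivial, mul_comm]

theorem l2norm_sub_sq_add_le_of_integral_mul_eq_zero {lam : ℝ} (hlam : 0 ≤ lam)
    {R f g : Ω → ℝ} (hR : MemLp R 2 P) (hf : MemLp f 2 P) (hg : MemLp g 2 P)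
    (hff : ∫ ω, (R ω - f ω) * f ω ∂P = 0) (hfg : ∫ ω, (R ω - f ω) * g ω ∂P = 0) :
    let gStar : Ω → ℝ := fun ω => max (1 - lam / l2norm P f) 0 * f ω
    l2norm P (fun ω => R ω - gStar ω) ^ 2 + 2 * lam * l2norm P gStar +
        l2norm P (fun ω => g ω - gStar ω) ^ 2 ≤
      l2norm P (fun ω => R ω - g ω) ^ 2 + 2 * lam * l2norm P g := by
  intro gStar
  have hgStar : MemLp gStar 2 P := hf.const_mul _
  have htoLp : hgStar.toLp gStar = softThreshold lam (hf.toLp f) := by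
    rw [softThreshold, ← l2norm_eq_norm_toLp hf]
    rfl
  rw [l2norm_sub_eq_norm_toLp_sub hR hgStar, l2norm_eq_norm_toLp hgStar,
    l2norm_sub_eq_norm_toLp_sub hg hgStar, l2norm_sub_eq_norm_toLp_sub hR hg,
    l2norm_eq_norm_toLp hg, htoLp]
  exact norm_sub_softThreshold_sq_add_le_of_inner_eq_zero hlam
    ((inner_toLp_toLp (hR.sub hf) hf).trans hff) ((inner_toLp_toLp (hR.sub hf) hg).trans hfg)

lemma integral_mul_condExp {m : MeasurableSpace Ω} (hm : m ≤ m₀) [SigmaFinite (P.trim hm)]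
    {u v : Ω → ℝ} (hu : AEStronglyMeasurable[m] u P) (huv : Integrable (u * v) P)
    (hv : Integrable v P) :
    ∫ ω, u ω * (P[v|m]) ω ∂P = ∫ ω, u ω * v ω ∂P :=
  (integral_congr_ae (condExp_mul_of_aestronglyMeasurable_left hu huv hv).symm).trans
    (integral_condExp hm)

variable {m₁ m₂ : MeasurableSpace Ω}

lemma memK.const_mul {g : Ω → ℝ} (hg : memK m₁ m₂ P g) (c : ℝ) :
    memK m₁ m₂ P (fun ω => c * g ω) := by
  refine ⟨hg.1.const_mul c, hg.2.1.const_smul c, (condExp_smul c g m₁).trans ?_⟩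
  filter_upwards [hg.2.2] with ω hω
  simp [hω]

variable [IsFiniteMeasure P]

lemma memK_condExp_sub_condExp (h12 : m₁ ≤ m₂) (h2 : m₂ ≤ m₀) {R : Ω → ℝ}
    (hR : MemLp R 2 P) : memK m₁ m₂ P (fun ω => (P[R|m₂]) ω - (P[R|m₁]) ω) := by
  refine ⟨(hR.condExp one_le_two).sub (hR.condExp one_le_two),
    stronglyMeasurable_condExp.aestronglyMeasurable.sub
      (stronglyMeasurable_condExp.mono h12).aestronglyMeasurable, ?_⟩
  change P[P[R|m₂] - P[R|m₁]|m₁] =ᵐ[P] 0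
  have hsub : P[P[R|m₂] - P[R|m₁]|m₁] =ᵐ[P] P[P[R|m₂]|m₁] - P[P[R|m₁]|m₁] :=
    condExp_sub integrable_condExp integrable_condExp m₁
  have htower : P[P[R|m₂]|m₁] =ᵐ[P] P[R|m₁] := condExp_condExp_of_le h12 h2
  have hidem : P[P[R|m₁]|m₁] = P[R|m₁] :=
    condExp_of_stronglyMeasurable (h12.trans h2) stronglyMeasurable_condExp integrable_condExp
  filter_upwards [hsub, htower] with ω hsubω htowerω
  simp [hsubω, htowerω, hidem]

lemma integral_sub_condExp_sub_condExp_mul_eq_zero (h12 : m₁ ≤ m₂) (h2 : m₂ ≤ m₀)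
    {R g : Ω → ℝ} (hR : MemLp R 2 P) (hg : memK m₁ m₂ P g) :
    ∫ ω, (R ω - ((P[R|m₂]) ω - (P[R|m₁]) ω)) * g ω ∂P = 0 := by
  have hRg : Integrable (fun ω => R ω * g ω) P := hR.integrable_mul hg.1
  have hR₂g : Integrable (fun ω => (P[R|m₂]) ω * g ω) P :=
    (hR.condExp one_le_two).integrable_mul hg.1
  have hR₁g : Integrable (fun ω => (P[R|m₁]) ω * g ω) P :=
    (hR.condExp one_le_two).integrable_mul hg.1
  have hfine : ∫ ω, (P[R|m₂]) ω * g ω ∂P = ∫ ω, R ω * g ω ∂P := by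
    simp_rw [mul_comm _ (g _)]
    exact integral_mul_condExp h2 hg.2.1 (hg.1.integrable_mul hR) (hR.integrable one_le_two)
  have hcoarse : ∫ ω, (P[R|m₁]) ω * g ω ∂P = 0 := by
    rw [← integral_mul_condExp (h12.trans h2) stronglyMeasurable_condExp.aestronglyMeasurable
      hR₁g (hg.1.integrable one_le_two)]
    have hzero : (fun ω => (P[R|m₁]) ω * (P[g|m₁]) ω) =ᵐ[P] 0 :=
      hg.2.2.mono fun ω hω => by simp [hω]
    simp [integral_congr_ae hzero]
  have hexpand : (fun ω => (R ω - ((P[R|m₂]) ω - (P[R|m₁]) ω)) * g ω) =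
      fun ω => (R ω * g ω - (P[R|m₂]) ω * g ω) + (P[R|m₁]) ω * g ω := by
    ext ω
    ring
  have hdiff : Integrable (fun ω => R ω * g ω - (P[R|m₂]) ω * g ω) P := hRg.sub hR₂g
  rw [hexpand, integral_add hdiff hR₁g, integral_sub hRg hR₂g, hfine, hcoarse]
  ring

end L2

/-- Theorem 1 (single-coordinate form): with `f := E[R|m₂] - E[R|m₁]` and
`g* := S_λ(f) = (1 - λ/‖f‖₂)₊ · f`, the function `g*` belongs to `K(m₁, m₂)` and minimizes
`g ↦ ‖R - g‖₂² + 2λ‖g‖₂` over `K(m₁, m₂)`; moreover any minimizer over `K(m₁, m₂)` equals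
`g*` a.e. -/
theorem soft_thresholded_projection_minimizes {Ω : Type*} {𝒢 : MeasurableSpace Ω}
    (P : Measure Ω) [IsProbabilityMeasure P] (m₁ m₂ : MeasurableSpace Ω)
    (h12 : m₁ ≤ m₂) (h2 : m₂ ≤ 𝒢) (R : Ω → ℝ) (hR : MemLp R 2 P)
    (lam : ℝ) (hlam : 0 ≤ lam) :
    let f : Ω → ℝ := fun ω => (P[R|m₂]) ω - (P[R|m₁]) ω
    let gStar : Ω → ℝ := fun ω => max (1 - lam / l2norm P f) 0 * f ω
    memK m₁ m₂ P gStar ∧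
      (∀ g : Ω → ℝ, memK m₁ m₂ P g →
        l2norm P (fun ω => R ω - gStar ω) ^ 2 + 2 * lam * l2norm P gStar ≤
          l2norm P (fun ω => R ω - g ω) ^ 2 + 2 * lam * l2norm P g) ∧
      ∀ g₀ : Ω → ℝ, memK m₁ m₂ P g₀ →
        (∀ g : Ω → ℝ, memK m₁ m₂ P g →
          l2norm P (fun ω => R ω - g₀ ω) ^ 2 + 2 * lam * l2norm P g₀ ≤
            l2norm P (fun ω => R ω - g ω) ^ 2 + 2 * lam * l2norm P g) →
        g₀ =ᵐ[P] gStar := by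
  intro f gStar
  have hfK : memK m₁ m₂ P f := memK_condExp_sub_condExp h12 h2 hR
  have hgStarK : memK m₁ m₂ P gStar := hfK.const_mul _
  have key : ∀ g, memK m₁ m₂ P g →
      l2norm P (fun ω => R ω - gStar ω) ^ 2 + 2 * lam * l2norm P gStar +
          l2norm P (fun ω => g ω - gStar ω) ^ 2 ≤
        l2norm P (fun ω => R ω - g ω) ^ 2 + 2 * lam * l2norm P g := fun g hg =>
    l2norm_sub_sq_add_le_of_integral_mul_eq_zero hlam hR hfK.1 hg.1
      (integral_sub_condExp_sub_condExp_mul_eq_zero h12 h2 hR hfK)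
      (integral_sub_condExp_sub_condExp_mul_eq_zero h12 h2 hR hg)
  refine ⟨hgStarK, fun g hg => ?_, fun g₀ hg₀ hmin => ?_⟩
  · linarith [key g hg, sq_nonneg (l2norm P fun ω => g ω - gStar ω)]
  · refine ae_eq_of_l2norm_sub_eq_zero hg₀.1 hgStarK.1 ?_
    refine pow_eq_zero_iff two_ne_zero |>.mp (le_antisymm ?_ (sq_nonneg _))
    linarith [key g₀ hg₀, hmin gStar hgStarK]
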